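/- arXiv:1012.2289 — 3 statements merged into one kernel-verified Lean document; each statement's English description precedes it below -/
import Mathlib

section
/- Let n ≥ 2, r = 1 + 2/(√n − 1), and v ∈ (0,1]^n. Then there exists an axis-parallel ellipsoid E with Q := [v₁/r, v₁] × ⋯ × [vₙ/r, vₙ] ⊆ E ⊆ [0,2]^n. -/
/-!
A box `∏ [lᵢ, uᵢ]` lies in the axis-parallel ellipsoid with the same center and semi-axes
`√n · (uᵢ - lᵢ)/2`, since each of the `n` terms of its defining sum is at most `1/n`; that
ellipsoid in turn lies in the box `∏ [cᵢ - aᵢ, cᵢ + aᵢ]`. For `lᵢ = vᵢ/r`, `uᵢ = vᵢ` the choice of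
`r` is exactly the one making `√n (r - 1) = r + 1`, i.e. `aᵢ = cᵢ`, so this outer box is
`∏ [0, vᵢ (1 + 1/r)] ⊆ [0, 2]^n`.
-/

open Finset

def axisEllipsoid {ι : Type*} [Fintype ι] (c a : ι → ℝ) : Set (ι → ℝ) :=
  {x | ∑ i, ((x i - c i) / a i) ^ 2 ≤ 1}

section AxisEllipsoid

variable {ι : Type*} [Fintype ι]

theorem abs_sub_le_of_mem_axisEllipsoid {c a x : ι → ℝ} (ha : ∀ i, 0 < a i)
    (hx : x ∈ axisEllipsoid c a) (i : ι) : |x i - c i| ≤ a i := by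
  have hi : ((x i - c i) / a i) ^ 2 ≤ 1 :=
    (single_le_sum (fun j _ => sq_nonneg ((x j - c j) / a j)) (mem_univ i)).trans hx
  rwa [sq_le_one_iff_abs_le_one, abs_div, abs_of_pos (ha i), div_le_one (ha i)] at hi

theorem mem_axisEllipsoid_of_abs_sub_le {c h x : ι → ℝ} (hh : ∀ i, 0 < h i)
    (hx : ∀ i, |x i - c i| ≤ h i) :
    x ∈ axisEllipsoid c (fun i => √(Fintype.card ι) * h i) := by
  have hterm : ∀ i, ((x i - c i) / (√(Fintype.card ι) * h i)) ^ 2 ≤ (Fintype.card ι : ℝ)⁻¹ := by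
    intro i
    have hi : ((x i - c i) / h i) ^ 2 ≤ 1 := by
      rw [sq_le_one_iff_abs_le_one, abs_div, abs_of_pos (hh i), div_le_one (hh i)]
      exact hx i
    calc ((x i - c i) / (√(Fintype.card ι) * h i)) ^ 2
        = ((x i - c i) / h i) ^ 2 * (Fintype.card ι : ℝ)⁻¹ := by
          rw [div_mul_eq_div_div_swap, div_pow, Real.sq_sqrt (Nat.cast_nonneg _), div_eq_mul_inv]
      _ ≤ (Fintype.card ι : ℝ)⁻¹ := mul_le_of_le_one_left (by positivity) hi
  calc ∑ i, ((x i - c i) / (√(Fintype.card ι) * h i)) ^ 2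
      ≤ ∑ _i : ι, (Fintype.card ι : ℝ)⁻¹ := sum_le_sum fun i _ => hterm i
    _ = Fintype.card ι * (Fintype.card ι : ℝ)⁻¹ := by rw [sum_const, card_univ, nsmul_eq_mul]
    _ ≤ 1 := mul_inv_le_one

theorem box_subset_axisEllipsoid {l u : ι → ℝ} (hlu : ∀ i, l i < u i) :
    {x : ι → ℝ | ∀ i, l i ≤ x i ∧ x i ≤ u i} ⊆
      axisEllipsoid (fun i => (l i + u i) / 2) (fun i => √(Fintype.card ι) * ((u i - l i) / 2)) :=
  fun x hx => mem_axisEllipsoid_of_abs_sub_le (fun i => by linarith [hlu i])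
    fun i => abs_le.2 ⟨by linarith [hx i], by linarith [hx i]⟩

end AxisEllipsoid

theorem mul_one_sub_inv_eq_one_add_inv {s : ℝ} (hs : 1 < s) :
    s * (1 - (1 + 2 / (s - 1))⁻¹) = 1 + (1 + 2 / (s - 1))⁻¹ := by
  have hs₁ : s - 1 ≠ 0 := by linarith
  have hs₂ : s + 1 ≠ 0 := by linarith
  rw [show 1 + 2 / (s - 1) = (s + 1) / (s - 1) by field_simp; ring, inv_div]
  field_simp
  ring

/-- For `v ∈ (0,1]^n` there is an axis-parallel ellipsoid `E` with
`[v₁/r, v₁] × ⋯ × [vₙ/r, vₙ] ⊆ E ⊆ [0,2]^n`, where `r = 1 + 2/(√n - 1)`. -/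
theorem axis_parallel_ellipsoid_between (n : ℕ) (hn : 2 ≤ n)
    (r : ℝ) (hr : r = 1 + 2 / (Real.sqrt n - 1))
    (v : Fin n → ℝ) (hv : ∀ i, 0 < v i ∧ v i ≤ 1) :
    ∃ (c a : Fin n → ℝ), (∀ i, 0 < a i) ∧
      {x : Fin n → ℝ | ∀ i, v i / r ≤ x i ∧ x i ≤ v i} ⊆
        {x : Fin n → ℝ | ∑ i, ((x i - c i) / a i) ^ 2 ≤ 1} ∧
      {x : Fin n → ℝ | ∑ i, ((x i - c i) / a i) ^ 2 ≤ 1} ⊆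
        {x : Fin n → ℝ | ∀ i, 0 ≤ x i ∧ x i ≤ 2} := by
  have hs : 1 < √(n : ℝ) := Real.lt_sqrt zero_le_one |>.2 (by norm_num; omega)
  have hr1 : 1 < r := hr ▸ lt_add_of_pos_right 1 (div_pos two_pos (sub_pos.2 hs))
  have hlt : ∀ i, v i / r < v i := fun i => div_lt_self (hv i).1 hr1
  have ha : ∀ i, √(Fintype.card (Fin n)) * ((v i - v i / r) / 2) = (v i / r + v i) / 2 := by
    intro i
    rw [Fintype.card_fin, hr]
    linear_combination v i / 2 * mul_one_sub_inv_eq_one_add_inv hs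
  have hpos : ∀ i, 0 < √(Fintype.card (Fin n)) * ((v i - v i / r) / 2) := fun i => by
    rw [ha]
    linarith [div_pos (hv i).1 (zero_lt_one.trans hr1), (hv i).1]
  refine ⟨_, _, hpos, box_subset_axisEllipsoid hlt, fun x hx i => ?_⟩
  have hxi := abs_le.1 (abs_sub_le_of_mem_axisEllipsoid hpos hx i)
  rw [ha] at hxi
  constructor <;> linarith [hlt i, (hv i).2]
end

section
/- Fix n ≥ 2 and ε ∈ (0,1). Let E = {x ∈ ℝ^n : Σ_{j=1}^n ((2^{−μ_j} − x_j)/2^{−μ_j})² ≤ 1} be an axis-parallel ellipsoid with μ ∈ ℝ^n, and let G_ε = {v ∈ ℝ^n : v_j = 2^{−α_j} ≥ ε, α_j ∈ ℕ₀}. Then |E ∩ G_ε| ≤ n · 3^{n−1} · (1 + ⌊log₂(1/ε)⌋). -/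
/-!
Write a grid point as `v_j = 2^{-α_j}`; its `j`-th term in the ellipsoid's sum is
`(1 - 2^{μ_j - α_j})²`. Since the terms sum to at most `1`, all but at most one of them are
`≤ 1/2`, and `(1 - q)² ≤ 1/2` confines `q` to `[1 - 1/√2, 1 + 1/√2]`, an interval whose endpoints
have ratio `(√2 + 1)² < 8`; so each such `α_j` takes one of three consecutive values. The remaining
coordinate has `ε ≤ 2^{-α_i}`, i.e. `α_i ≤ ⌊log₂(1/ε)⌋`. Summing over the choice of the exceptional
coordinate gives the bound.
-/

open Finset

lemma lt_eight_mul_of_sq_one_sub_le_half {q r : ℝ}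
    (hr : (1 - r) ^ 2 ≤ 1 / 2) (hq : (1 - q) ^ 2 ≤ 1 / 2) : r < 8 * q := by
  nlinarith [sq_nonneg (r - 8 * q), sq_nonneg (r - q)]

lemma le_add_two_of_sq_one_sub_two_rpow_le_half {c : ℝ} {a b : ℕ}
    (ha : (1 - (2 : ℝ) ^ (c - a)) ^ 2 ≤ 1 / 2) (hb : (1 - (2 : ℝ) ^ (c - b)) ^ 2 ≤ 1 / 2) :
    b ≤ a + 2 := by
  by_contra! hab
  have hgap : (2 : ℝ) ^ (c - b) * 8 ≤ 2 ^ (c - a) := by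
    have h3 : (a : ℝ) + 3 ≤ b := by exact_mod_cast hab
    calc (2 : ℝ) ^ (c - b) * 8 = 2 ^ (c - b + 3) := by
          rw [Real.rpow_add two_pos]; norm_num
      _ ≤ 2 ^ (c - a) := Real.rpow_le_rpow_of_exponent_le one_le_two (by linarith)
  have := lt_eight_mul_of_sq_one_sub_le_half ha hb
  linarith

lemma exists_card_le_three_of_sq_one_sub_two_rpow_le_half (c : ℝ) :
    ∃ s : Finset ℕ, #s ≤ 3 ∧ ∀ α : ℕ, (1 - (2 : ℝ) ^ (c - α)) ^ 2 ≤ 1 / 2 → α ∈ s := by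
  classical
  by_cases h : ∃ α : ℕ, (1 - (2 : ℝ) ^ (c - α)) ^ 2 ≤ 1 / 2
  · refine ⟨Icc (Nat.find h) (Nat.find h + 2), by rw [Nat.card_Icc]; omega,
      fun α hα => mem_Icc.2 ⟨Nat.find_min' h hα, ?_⟩⟩
    exact le_add_two_of_sq_one_sub_two_rpow_le_half (Nat.find_spec h) hα
  · exact ⟨∅, by simp, fun α hα => (h ⟨α, hα⟩).elim⟩

lemma le_floor_logb_of_le_two_rpow_neg {ε : ℝ} (hε : 0 < ε) {α : ℕ}
    (h : ε ≤ (2 : ℝ) ^ (-(α : ℝ))) : α ≤ ⌊Real.logb 2 (1 / ε)⌋₊ := by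
  refine Nat.le_floor ((Real.le_logb_iff_rpow_le one_lt_two (by positivity)).2 ?_)
  rw [Real.rpow_neg zero_le_two] at h
  rwa [le_one_div (by positivity) hε, one_div]

lemma sub_div_two_rpow_neg (m a : ℝ) :
    ((2 : ℝ) ^ (-m) - 2 ^ (-a)) / 2 ^ (-m) = 1 - 2 ^ (m - a) := by
  rw [sub_div, div_self (by positivity), ← Real.rpow_sub two_pos]
  ring_nf

lemma exists_forall_ne_le_half_of_sum_le_one {ι : Type*} [Fintype ι] [Nonempty ι] {f : ι → ℝ}
    (hf : ∀ i, 0 ≤ f i) (hsum : ∑ i, f i ≤ 1) : ∃ i, ∀ j ≠ i, f j ≤ 1 / 2 := by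
  classical
  by_cases h : ∃ i, 1 / 2 < f i
  · obtain ⟨i, hi⟩ := h
    refine ⟨i, fun j hji => ?_⟩
    have : f i + f j ≤ ∑ k, f k := by
      rw [← sum_pair hji.symm]
      exact sum_le_univ_sum_of_nonneg hf
    linarith
  · exact ⟨Classical.arbitrary ι, fun j _ => not_lt.1 fun hj => h ⟨j, hj⟩⟩

lemma prod_card_update_le {ι α : Type*} [Fintype ι] [DecidableEq ι] (G : Finset α)
    (B : ι → Finset α) {g b : ℕ} (hG : #G ≤ g) (hB : ∀ j, #(B j) ≤ b) (i : ι) :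
    ∏ j, #(Function.update B i G j) ≤ b ^ (Fintype.card ι - 1) * g := by
  have h : ∀ j, #(Function.update B i G j) = Function.update (fun j => #(B j)) i #G j :=
    fun j => Function.apply_update (fun _ s => #s) B i G j
  simp_rw [h]
  rw [prod_update_of_mem (mem_univ i), mul_comm]
  have hcard : #(univ \ {i}) = Fintype.card ι - 1 := by
    rw [card_sdiff_of_subset (subset_univ _), card_singleton, card_univ]
  gcongr
  rw [← hcard]
  exact prod_le_pow_card _ _ _ fun j _ => hB j

lemma ncard_le_of_forall_exists_ne_mem {ι α : Type*} [Fintype ι] [DecidableEq ι] [DecidableEq α]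
    {S : Set (ι → α)} (G : Finset α) (B : ι → Finset α) {g b : ℕ} (hG : #G ≤ g)
    (hB : ∀ j, #(B j) ≤ b) (hS : ∀ v ∈ S, ∃ i, v i ∈ G ∧ ∀ j ≠ i, v j ∈ B j) :
    S.ncard ≤ Fintype.card ι * b ^ (Fintype.card ι - 1) * g := by
  let U := univ.biUnion fun i => Fintype.piFinset (Function.update B i G)
  have hSU : S ⊆ U := by
    intro v hv
    obtain ⟨i, hi, hj⟩ := hS v hv
    simp only [U, coe_biUnion, coe_univ, Set.mem_univ, Set.iUnion_true, Set.mem_iUnion, mem_coe,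
      Fintype.mem_piFinset]
    refine ⟨i, fun j => ?_⟩
    rcases eq_or_ne j i with rfl | hji
    · simpa using hi
    · simpa [hji] using hj j hji
  calc S.ncard ≤ #U := by simpa using Set.ncard_le_ncard hSU U.finite_toSet
    _ ≤ ∑ i, #(Fintype.piFinset (Function.update B i G)) := card_biUnion_le
    _ ≤ ∑ _i : ι, b ^ (Fintype.card ι - 1) * g := by
        gcongr with i
        rw [Fintype.card_piFinset]
        exact prod_card_update_le G B hG hB i
    _ = Fintype.card ι * b ^ (Fintype.card ι - 1) * g := by
        rw [sum_const, card_univ, smul_eq_mul, mul_assoc]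

/-- An axis-parallel ellipsoid `E = {x : ∑_j ((2^{-μ_j} - x_j)/2^{-μ_j})² ≤ 1}` contains
at most `n·3^{n-1}·(1 + ⌊log₂(1/ε)⌋)` points of the grid
`G_ε = {v : v_j = 2^{-α_j} ≥ ε, α_j ∈ ℕ}`. -/
theorem ellipsoid_grid_points_bound (n : ℕ) (hn : 2 ≤ n)
    (ε : ℝ) (hε : ε ∈ Set.Ioo (0 : ℝ) 1) (μ : Fin n → ℝ) :
    ({x : Fin n → ℝ | ∑ j, (((2:ℝ) ^ (-μ j) - x j) / (2:ℝ) ^ (-μ j)) ^ 2 ≤ 1} ∩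
      {v : Fin n → ℝ | ∀ j, ∃ α : ℕ, v j = (2:ℝ) ^ (-(α:ℝ)) ∧ ε ≤ v j}).ncard ≤
    n * 3 ^ (n - 1) * (1 + ⌊Real.logb 2 (1 / ε)⌋₊) := by
  classical
  have : Nonempty (Fin n) := ⟨⟨0, by omega⟩⟩
  choose s hs3 hs using fun j => exists_card_le_three_of_sq_one_sub_two_rpow_le_half (μ j)
  let pow2 : ℕ → ℝ := fun α => 2 ^ (-(α : ℝ))
  have hG : #((range (⌊Real.logb 2 (1 / ε)⌋₊ + 1)).image pow2) ≤ 1 + ⌊Real.logb 2 (1 / ε)⌋₊ :=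
    card_image_le.trans (by rw [card_range, add_comm])
  refine (ncard_le_of_forall_exists_ne_mem _ (fun j => (s j).image pow2) hG
    (fun j => card_image_le.trans (hs3 j)) ?_).trans_eq (by rw [Fintype.card_fin])
  rintro v ⟨hE, hgrid⟩
  choose α hα hαε using hgrid
  have hsum : ∑ j, (1 - (2 : ℝ) ^ (μ j - α j)) ^ 2 ≤ 1 := by
    simpa only [Set.mem_ofPred_eq, hα, sub_div_two_rpow_neg] using hE
  obtain ⟨i, hi⟩ := exists_forall_ne_le_half_of_sum_le_one (fun j => sq_nonneg _) hsum
  refine ⟨i, ?_, fun j hj => ?_⟩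
  · rw [hα i]
    exact mem_image_of_mem _ <| mem_range.2 <| Nat.lt_succ_of_le <|
      le_floor_logb_of_le_two_rpow_neg hε.1 (hα i ▸ hαε i)
  · rw [hα j]
    exact mem_image_of_mem _ (hs j _ (hi j hj))
end

section
/- For every n ≥ 1 and ε ∈ (0,1), there exist at most 2^n·(1 + log₂(1/ε))^n axis-parallel boxes, each of which remains inside [−1,1]^n after scaling by a factor of 2 about its center, whose union covers [−1+ε, 1−ε]^n. -/
/-!
On `[0, 1)` the dyadic intervals `[1 - 2⁻ⁱ, 1 - 2⁻⁽ⁱ⁺¹⁾]` have length equal to their distance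
from `1`, so doubling one about its centre (which adds a quarter of `2⁻ⁱ` on each side) keeps it
inside `[-1, 1]`. With `K = ⌊log₂(1/ε)⌋ + 1` the first `K` of them cover `[0, 1 - ε]`, and together
with their mirror images they give `2K ≤ 2 (1 + log₂(1/ε))` admissible intervals covering
`[-1 + ε, 1 - ε]`. Products of these intervals give `(2K)ⁿ` admissible boxes covering the cube.
-/

open Set

/-- Doubling `[lo, hi]` about its centre gives `[(3 lo - hi) / 2, (3 hi - lo) / 2]`. -/
def DoublesIntoUnit (lo hi : ℝ) : Prop :=
  -2 ≤ 3 * lo - hi ∧ 3 * hi - lo ≤ 2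

theorem DoublesIntoUnit.neg {lo hi : ℝ} (h : DoublesIntoUnit lo hi) :
    DoublesIntoUnit (-hi) (-lo) :=
  ⟨by linarith [h.2], by linarith [h.1]⟩

theorem doubled_box_subset_cube {α : Type*} {lo hi : α → ℝ}
    (h : ∀ j, DoublesIntoUnit (lo j) (hi j)) :
    (fun x : α → ℝ => fun j => (lo j + hi j) / 2 + 2 * (x j - (lo j + hi j) / 2)) ''
        {x | ∀ j, lo j ≤ x j ∧ x j ≤ hi j} ⊆
      {x | ∀ j, -1 ≤ x j ∧ x j ≤ 1} := by
  rintro _ ⟨x, hx, rfl⟩ j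
  have := h j
  constructor <;> linarith [hx j, this.1, this.2]

theorem pi_subset_iUnion_boxes {α ι : Type*} {lo hi : ι → ℝ} {s : Set ℝ}
    (h : ∀ t ∈ s, ∃ k, lo k ≤ t ∧ t ≤ hi k) :
    {x : α → ℝ | ∀ j, x j ∈ s} ⊆
      ⋃ f : α → ι, {x | ∀ j, lo (f j) ≤ x j ∧ x j ≤ hi (f j)} := by
  intro x hx
  choose f hf using fun j => h (x j) (hx j)
  exact mem_iUnion.2 ⟨f, hf⟩

noncomputable def dyadicPoint (i : ℕ) : ℝ := 1 - 2⁻¹ ^ i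

theorem dyadicPoint_strictMono : StrictMono dyadicPoint := fun _ _ hij => by
  have := pow_lt_pow_right_of_lt_one₀ (by norm_num : (0 : ℝ) < 2⁻¹) (by norm_num) hij
  unfold dyadicPoint
  linarith

theorem exists_dyadicPoint_le_lt {u : ℝ} (hu₀ : 0 ≤ u) (hu₁ : u < 1) :
    ∃ i, dyadicPoint i ≤ u ∧ u < dyadicPoint (i + 1) := by
  obtain ⟨i, hlt, hle⟩ := exists_nat_pow_near_of_lt_one (x := 1 - u) (y := (2⁻¹ : ℝ))
    (by linarith) (by linarith) (by norm_num) (by norm_num)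
  exact ⟨i, by unfold dyadicPoint; linarith, by unfold dyadicPoint; linarith⟩

theorem doublesIntoUnit_dyadicPoint (i : ℕ) :
    DoublesIntoUnit (dyadicPoint i) (dyadicPoint (i + 1)) := by
  have h₀ : (0 : ℝ) < 2⁻¹ ^ i := by positivity
  have h₁ : (2⁻¹ : ℝ) ^ i ≤ 1 := pow_le_one₀ (by norm_num) (by norm_num)
  unfold DoublesIntoUnit dyadicPoint
  constructor <;> rw [pow_succ] <;> linarith

/-- `dyadicLo true i`, `dyadicHi true i` are the endpoints of the `i`-th dyadic interval in
`[0, 1)`; `false` gives its mirror image in `(-1, 0]`. -/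
noncomputable def dyadicLo : Bool → ℕ → ℝ
  | true, i => dyadicPoint i
  | false, i => -dyadicPoint (i + 1)

noncomputable def dyadicHi : Bool → ℕ → ℝ
  | true, i => dyadicPoint (i + 1)
  | false, i => -dyadicPoint i

theorem dyadicLo_le_dyadicHi (s : Bool) (i : ℕ) : dyadicLo s i ≤ dyadicHi s i := by
  have := dyadicPoint_strictMono.monotone (Nat.le_succ i)
  cases s
  · exact neg_le_neg this
  · exact this

theorem doublesIntoUnit_dyadic (s : Bool) (i : ℕ) :
    DoublesIntoUnit (dyadicLo s i) (dyadicHi s i) := by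
  cases s
  · exact (doublesIntoUnit_dyadicPoint i).neg
  · exact doublesIntoUnit_dyadicPoint i

theorem exists_dyadic_mem {K : ℕ} {ε t : ℝ} (hK : (2⁻¹ : ℝ) ^ K < ε)
    (ht : t ∈ Icc (-1 + ε) (1 - ε)) :
    ∃ p : Bool × Fin K, dyadicLo p.1 p.2 ≤ t ∧ t ≤ dyadicHi p.1 p.2 := by
  have hε : 0 < ε := lt_trans (by positivity) hK
  have hK' : 1 - ε < dyadicPoint K := by unfold dyadicPoint; linarith
  have below_depth : ∀ {i : ℕ} {u : ℝ}, dyadicPoint i ≤ u → u ≤ 1 - ε → i < K := fun hi hu =>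
    dyadicPoint_strictMono.lt_iff_lt.1 (by linarith)
  rcases le_or_gt 0 t with ht₀ | ht₀
  · obtain ⟨i, hi, hi'⟩ := exists_dyadicPoint_le_lt ht₀ (by linarith [ht.2])
    exact ⟨(true, ⟨i, below_depth hi ht.2⟩), hi, hi'.le⟩
  · obtain ⟨i, hi, hi'⟩ := exists_dyadicPoint_le_lt (neg_nonneg.2 ht₀.le) (by linarith [ht.1])
    refine ⟨(false, ⟨i, below_depth hi (by linarith [ht.1])⟩), ?_, ?_⟩
    · change -dyadicPoint (i + 1) ≤ t
      linarith
    · change t ≤ -dyadicPoint i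
      linarith

theorem exists_dyadic_depth {ε : ℝ} (hε : ε ∈ Ioo (0 : ℝ) 1) :
    ∃ K : ℕ, (2⁻¹ : ℝ) ^ K < ε ∧ (K : ℝ) ≤ 1 + Real.logb 2 (1 / ε) := by
  obtain ⟨hε₀, hε₁⟩ := hε
  have hlog : 0 ≤ Real.logb 2 (1 / ε) :=
    Real.logb_nonneg one_lt_two (by rw [le_div_iff₀ hε₀]; linarith)
  refine ⟨⌊Real.logb 2 (1 / ε)⌋₊ + 1, ?_, ?_⟩
  · have h := (Real.logb_lt_iff_lt_rpow one_lt_two (by positivity)).1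
      (Nat.lt_floor_add_one (Real.logb 2 (1 / ε)))
    rw [← Nat.cast_add_one, Real.rpow_natCast, one_div_lt hε₀ (by positivity)] at h
    rwa [inv_pow, ← one_div]
  · push_cast
    linarith [Nat.floor_le hlog]

theorem box_covering_upper_bound_general (n : ℕ)
    (ε : ℝ) (hε : ε ∈ Set.Ioo (0 : ℝ) 1) :
    ∃ (m : ℕ) (lo hi : Fin m → Fin n → ℝ),
      (∀ i j, lo i j ≤ hi i j) ∧
      (∀ i, (fun x : Fin n → ℝ => fun j =>
          (lo i j + hi i j) / 2 + 2 * (x j - (lo i j + hi i j) / 2)) ''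
          {x : Fin n → ℝ | ∀ j, lo i j ≤ x j ∧ x j ≤ hi i j} ⊆
        {x : Fin n → ℝ | ∀ j, -1 ≤ x j ∧ x j ≤ 1}) ∧
      ({x : Fin n → ℝ | ∀ j, -1 + ε ≤ x j ∧ x j ≤ 1 - ε} ⊆
        ⋃ i, {x : Fin n → ℝ | ∀ j, lo i j ≤ x j ∧ x j ≤ hi i j}) ∧
      (m : ℝ) ≤ 2 ^ n * (1 + Real.logb 2 (1 / ε)) ^ n := by
  obtain ⟨K, hKε, hKlog⟩ := exists_dyadic_depth hε
  let e := (Fintype.equivFin (Fin n → Bool × Fin K)).symm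
  refine ⟨_, fun i j => dyadicLo (e i j).1 (e i j).2, fun i j => dyadicHi (e i j).1 (e i j).2,
    fun i j => dyadicLo_le_dyadicHi _ _,
    fun i => doubled_box_subset_cube fun j => doublesIntoUnit_dyadic _ _, ?_, ?_⟩
  · refine (pi_subset_iUnion_boxes fun t ht => exists_dyadic_mem hKε ht).trans ?_
    exact (e.surjective.iUnion_comp _).ge
  · have hcard : Fintype.card (Fin n → Bool × Fin K) = (2 * K) ^ n := by simp
    rw [hcard, ← mul_pow]
    push_cast
    gcongr

/-- For every `n ≥ 1` and `ε ∈ (0,1)` there exist at most `2^n·(1 + log₂(1/ε))^n`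
axis-parallel boxes, each of which remains inside `[-1,1]^n` after scaling by a
factor of `2` about its center, whose union covers `[-1+ε, 1-ε]^n`. -/
theorem box_covering_upper_bound (n : ℕ) (hn : 1 ≤ n)
    (ε : ℝ) (hε : ε ∈ Set.Ioo (0 : ℝ) 1) :
    ∃ (m : ℕ) (lo hi : Fin m → Fin n → ℝ),
      (∀ i j, lo i j ≤ hi i j) ∧
      (∀ i, (fun x : Fin n → ℝ => fun j =>
          (lo i j + hi i j) / 2 + 2 * (x j - (lo i j + hi i j) / 2)) ''
          {x : Fin n → ℝ | ∀ j, lo i j ≤ x j ∧ x j ≤ hi i j} ⊆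
        {x : Fin n → ℝ | ∀ j, -1 ≤ x j ∧ x j ≤ 1}) ∧
      ({x : Fin n → ℝ | ∀ j, -1 + ε ≤ x j ∧ x j ≤ 1 - ε} ⊆
        ⋃ i, {x : Fin n → ℝ | ∀ j, lo i j ≤ x j ∧ x j ≤ hi i j}) ∧
      (m : ℝ) ≤ 2 ^ n * (1 + Real.logb 2 (1 / ε)) ^ n :=
  box_covering_upper_bound_general n ε hε
end
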